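/- arXiv:1101.4151 — 2 statements merged into one kernel-verified Lean document; each statement's English description precedes it below -/
import Mathlib

section
/- Let A be a family of subsets of {1,...,n} such that for all distinct A, B in the family, |A \ B| ≠ 2|B \ A|. Then for every integer k with 2n/3 ≤ k ≤ n, the sum over j from 2k−n to k of |A_j| / C(n,j) is at most 1. -/
/-!
Katona's permutation method. Put `m = 2k - n` and, for `m ≤ j ≤ k`,
`T j = [0, 2m - j) ∪ [m, 2j - m) ⊆ [0, n)`. Then `|T j| = j`, and for `b < a` one has
`T a \ T b = [2b - m, 2a - m)` and `T b \ T a = [2m - a, 2m - b)`, so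
`|T a \ T b| = 2 |T b \ T a|`. Hence for every permutation `σ` at most one member of `𝒜` has
the form `σ (T j)`. A `j`-set equals `σ (T j)` for exactly `n! / C(n, j)` permutations `σ`, and
these sets of permutations are disjoint for distinct members of `𝒜`, which gives the bound.
-/

open Finset Equiv
open scoped Pointwise Nat

section Katona
variable {α : Type*} [DecidableEq α]

lemma eq_of_perm_smul_of_card_sdiff_ne_two_mul {𝒜 : Finset (Finset α)} {I : Finset ℕ}
    {S : ℕ → Finset α} (hchain : ∀ a ∈ I, ∀ b ∈ I, b < a → #(S a \ S b) = 2 * #(S b \ S a))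
    (h𝒜 : ∀ A ∈ 𝒜, ∀ B ∈ 𝒜, A ≠ B → #(A \ B) ≠ 2 * #(B \ A)) (σ : Perm α)
    (A : Finset α) (hA : A ∈ 𝒜) (B : Finset α) (hB : B ∈ 𝒜) (hAI : #A ∈ I) (hBI : #B ∈ I)
    (hσA : σ • S (#A) = A) (hσB : σ • S (#B) = B) : A = B := by
  have hsdiff : ∀ {X Y : Finset α}, σ • S (#X) = X → σ • S (#Y) = Y →
      #(X \ Y) = #(S (#X) \ S (#Y)) := fun {X Y} hX hY => by
    rw [← card_smul_finset σ (S (#X) \ S (#Y)), smul_finset_sdiff, hX, hY]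
  by_contra hAB
  rcases lt_trichotomy #A #B with hlt | heq | hgt
  · exact h𝒜 B hB A hA (Ne.symm hAB) <| by
      rw [hsdiff hσB hσA, hsdiff hσA hσB, hchain _ hBI _ hAI hlt]
  · exact hAB <| by rw [← hσA, ← hσB, heq]
  · exact h𝒜 A hA B hB hAB <| by
      rw [hsdiff hσA hσB, hsdiff hσB hσA, hchain _ hAI _ hBI hgt]

variable [Fintype α]

lemma card_perm_smul_eq_of_card_eq {s t t' : Finset α} (ht : #t = #t') :
    #{σ : Perm α | σ • s = t} = #{σ : Perm α | σ • s = t'} := by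
  obtain ⟨τ, hτ⟩ : ∃ τ : Perm α, τ • t = t' := by
    have := Set.powersetCard.isPretransitive (α := α) (n := #t')
    obtain ⟨τ, hτ⟩ := MulAction.exists_smul_eq (Perm α)
      (Set.powersetCard.ofCard ht) (Set.powersetCard.ofCard rfl)
    exact ⟨τ, congrArg Subtype.val hτ⟩
  refine card_bij' (fun σ _ => τ * σ) (fun σ _ => τ⁻¹ * σ) ?_ ?_ ?_ ?_ <;>
    simp_all [mul_smul, inv_smul_eq_iff]

lemma card_perm_smul_eq_mul_choose {s t : Finset α} (hst : #s = #t) :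
    #{σ : Perm α | σ • s = t} * (Fintype.card α).choose #s = (Fintype.card α)! := by
  calc #{σ : Perm α | σ • s = t} * (Fintype.card α).choose #s
      = ∑ t' ∈ powersetCard #s univ, #{σ : Perm α | σ • s = t'} := by
        rw [sum_congr rfl fun t' ht' => card_perm_smul_eq_of_card_eq (s := s)
          ((mem_powersetCard.1 ht').2.trans hst), sum_const, card_powersetCard,
          card_univ, smul_eq_mul, mul_comm]
    _ = #(univ : Finset (Perm α)) :=
        (card_eq_sum_card_fiberwise fun σ _ => mem_powersetCard.2
          ⟨subset_univ _, card_smul_finset σ s⟩).symm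
    _ = (Fintype.card α)! := by rw [card_univ, Fintype.card_perm]

theorem sum_card_slice_div_choose_le_one_of_perm_smul {𝕜 : Type*} [Field 𝕜] [LinearOrder 𝕜]
    [IsStrictOrderedRing 𝕜] {𝒜 : Finset (Finset α)} {I : Finset ℕ} {S : ℕ → Finset α}
    (hS : ∀ j ∈ I, #(S j) = j)
    (h𝒜 : ∀ σ : Perm α, ∀ A ∈ 𝒜, ∀ B ∈ 𝒜, #A ∈ I → #B ∈ I → σ • S (#A) = A → σ • S (#B) = B →
      A = B) :
    ∑ j ∈ I, (#(𝒜 # j) / (Fintype.card α).choose j : 𝕜) ≤ 1 := by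
  set 𝒜' := {A ∈ 𝒜 | #A ∈ I}
  set F : Finset α → Finset (Perm α) := fun A => {σ | σ • S (#A) = A}
  have hdisj : (𝒜' : Set (Finset α)).PairwiseDisjoint F := by
    intro A hA B hB hAB
    rw [mem_coe, mem_filter] at hA hB
    refine disjoint_left.2 fun σ hσA hσB => hAB ?_
    exact h𝒜 σ A hA.1 B hB.1 hA.2 hB.2 (mem_filter.1 hσA).2 (mem_filter.1 hσB).2
  have hcount : ∑ A ∈ 𝒜', #(F A) ≤ (Fintype.card α)! := by
    rw [← card_biUnion hdisj, ← Fintype.card_perm, ← card_univ]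
    exact card_le_univ _
  have hF : ∀ A ∈ 𝒜', ((Fintype.card α).choose #A : 𝕜)⁻¹ = #(F A) / (Fintype.card α)! := by
    intro A hA
    have hSA := hS _ (mem_filter.1 hA).2
    have hchoose : ((Fintype.card α).choose #A : 𝕜) ≠ 0 := by
      exact_mod_cast (Nat.choose_pos (card_le_univ A)).ne'
    rw [eq_div_iff (by positivity), ← card_perm_smul_eq_mul_choose hSA, hSA]
    push_cast
    field_simp
    rfl
  calc ∑ j ∈ I, (#(𝒜 # j) / (Fintype.card α).choose j : 𝕜)
      = ∑ A ∈ 𝒜', ((Fintype.card α).choose #A : 𝕜)⁻¹ := by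
        rw [← sum_fiberwise_of_maps_to (g := card) (t := I) fun A hA => (mem_filter.1 hA).2]
        refine sum_congr rfl fun j hj => ?_
        have hslice : {A ∈ 𝒜' | #A = j} = 𝒜 # j := by
          ext A
          simp only [𝒜', filter_filter, mem_filter, mem_slice]
          grind
        rw [hslice, sum_congr rfl fun A hA => by rw [(mem_slice.1 hA).2], sum_const,
          nsmul_eq_mul, div_eq_mul_inv]
    _ = ∑ A ∈ 𝒜', (#(F A) / (Fintype.card α)! : 𝕜) := Finset.sum_congr rfl hF
    _ ≤ 1 := by
      rw [← sum_div, div_le_one (by positivity)]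
      exact_mod_cast hcount

end Katona

def ratioChain (m j : ℕ) : Finset ℕ := range (2 * m - j) ∪ Ico m (2 * j - m)

section ratioChain
variable {m a b j : ℕ}

lemma card_ratioChain (hmj : m ≤ j) (hjm : j ≤ 2 * m) : #(ratioChain m j) = j := by
  rw [ratioChain, card_union_of_disjoint, card_range, Nat.card_Ico]
  · omega
  · exact disjoint_left.2 fun x hx hx' => by
      rw [mem_range] at hx
      rw [mem_Ico] at hx'
      omega

lemma lt_of_mem_ratioChain {x : ℕ} (hmj : m ≤ j) (hx : x ∈ ratioChain m j) : x < 2 * j - m := by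
  rw [ratioChain, mem_union, mem_range, mem_Ico] at hx
  omega

lemma card_ratioChain_sdiff (hmb : m ≤ b) (hba : b ≤ a) (ham : a ≤ 2 * m) :
    #(ratioChain m a \ ratioChain m b) = 2 * #(ratioChain m b \ ratioChain m a) := by
  have hab : ratioChain m a \ ratioChain m b = Ico (2 * b - m) (2 * a - m) := by
    ext x
    simp only [ratioChain, mem_sdiff, mem_union, mem_range, mem_Ico]
    omega
  have hba : ratioChain m b \ ratioChain m a = Ico (2 * m - a) (2 * m - b) := by
    ext x
    simp only [ratioChain, mem_sdiff, mem_union, mem_range, mem_Ico]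
    omega
  rw [hab, hba, Nat.card_Ico, Nat.card_Ico]
  omega

end ratioChain

lemma Fin.map_valEmbedding_filter_val_mem {n : ℕ} {U : Finset ℕ} (hU : ∀ x ∈ U, x < n) :
    ({i : Fin n | ↑i ∈ U} : Finset (Fin n)).map Fin.valEmbedding = U := by
  ext x
  simp only [mem_map, mem_filter, mem_univ, true_and, Fin.valEmbedding_apply]
  exact ⟨fun ⟨i, hi, hix⟩ => hix ▸ hi, fun hx => ⟨⟨x, hU x hx⟩, hx, rfl⟩⟩

theorem stmt_1_general (n : ℕ) (𝒜 : Finset (Finset (Fin n)))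
    (h : ∀ A ∈ 𝒜, ∀ B ∈ 𝒜, A ≠ B → (A \ B).card ≠ 2 * (B \ A).card)
    (k : ℕ) (hk₁ : 2 * n ≤ 3 * k) :
    ∑ j ∈ Finset.Icc (2 * k - n) k,
      ((𝒜.filter (fun s => s.card = j)).card : ℝ) / (n.choose j : ℝ) ≤ 1 := by
  set m := 2 * k - n
  set S : ℕ → Finset (Fin n) := fun j => {i | ↑i ∈ ratioChain m j}
  have hS : ∀ j ∈ Icc m k, (S j).map Fin.valEmbedding = ratioChain m j := fun j hj =>
    Fin.map_valEmbedding_filter_val_mem fun x hx => by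
      have := lt_of_mem_ratioChain (mem_Icc.1 hj).1 hx
      grind
  have hcard : ∀ j ∈ Icc m k, #(S j) = j := fun j hj => by
    rw [← card_map Fin.valEmbedding, hS j hj, card_ratioChain (mem_Icc.1 hj).1 (by grind)]
  have hchain : ∀ a ∈ Icc m k, ∀ b ∈ Icc m k, b < a → #(S a \ S b) = 2 * #(S b \ S a) :=
    fun a ha b hb hba => by
      rw [← card_map Fin.valEmbedding, Finset.map_sdiff,
        ← card_map (s := S b \ S a) Fin.valEmbedding, Finset.map_sdiff, hS a ha, hS b hb,
        card_ratioChain_sdiff (mem_Icc.1 hb).1 hba.le (by grind)]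
  simpa [slice] using sum_card_slice_div_choose_le_one_of_perm_smul (𝕜 := ℝ) hcard
    (eq_of_perm_smul_of_card_sdiff_ne_two_mul hchain h)

theorem stmt_1 (n : ℕ) (𝒜 : Finset (Finset (Fin n)))
    (h : ∀ A ∈ 𝒜, ∀ B ∈ 𝒜, A ≠ B → (A \ B).card ≠ 2 * (B \ A).card)
    (k : ℕ) (hk₁ : 2 * n ≤ 3 * k) (hk₂ : k ≤ n) :
    ∑ j ∈ Finset.Icc (2 * k - n) k,
      ((𝒜.filter (fun s => s.card = j)).card : ℝ) / (n.choose j : ℝ) ≤ 1 :=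
  stmt_1_general n 𝒜 h k hk₁
end

section
/- Let p < q be coprime positive integers and suppose n = (p+q)m. Let A be a family of subsets of [n] with p|A \ B| ≠ q|B \ A| for all distinct A, B in A. Then for each k with 0 ≤ k ≤ q−p−1, the sum of |A_j| / C(n,j) over all j with ⌈pn/(p+q)⌉ ≤ j ≤ ⌊qn/(p+q)⌋ and j ≡ k (mod q−p) is at most 1. -/
/-!
Katona's permutation method. Write `e = q - p`. For every admissible size `j` take as `W j` the
interval of length `j` starting at `p * ℓ j`, where `ℓ j = ⌊j / e⌋ - ⌊p m / e⌋`. If `i < j` are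
admissible then `j = i + e t` with `t = ℓ j - ℓ i`, so sliding from `W i` to `W j` drops `p t`
points and gains `q t`: the hypothesis forbids `σ • W i` and `σ • W j` from both lying in `𝒜`.
Since `σ • W j` is uniformly distributed over the `j`-sets as `σ` ranges over permutations,
`σ • W j ∈ 𝒜` happens for the fraction `|𝒜_j| / C(n, j)` of all `σ`, and these events are
pairwise disjoint.
-/

open Finset Equiv
open scoped Pointwise Nat

section PermutationCounting

variable {α : Type*} [DecidableEq α]

theorem exists_perm_smul_finset_eq {A B : Finset α} (h : #A = #B) :
    ∃ σ : Perm α, σ • A = B := by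
  obtain ⟨σ, hσ⟩ := (Set.powersetCard.isPretransitive (α := α) (n := #B)).exists_smul_eq
    (Set.powersetCard.ofCard h) (Set.powersetCard.ofCard rfl)
  exact ⟨σ, congrArg Subtype.val hσ⟩

variable [Fintype α]

theorem card_perm_smul_finset_eq_mul_choose {P A : Finset α} (h : #A = #P) :
    #{σ : Perm α | σ • P = A} * (Fintype.card α).choose #P = (Fintype.card α)! := by
  have fiber_eq : ∀ B ∈ powersetCard #P univ,
      #{σ : Perm α | σ • P = B} = #{σ : Perm α | σ • P = A} := by
    intro B hB
    obtain ⟨τ, hτ⟩ := exists_perm_smul_finset_eq (h.trans (mem_powersetCard.1 hB).2.symm)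
    refine card_nbij' (τ⁻¹ * ·) (τ * ·) ?_ ?_ ?_ ?_ <;> intro σ hσ <;>
      simp_all [mul_smul, inv_smul_eq_iff]
  calc #{σ : Perm α | σ • P = A} * (Fintype.card α).choose #P
      = ∑ B ∈ powersetCard #P univ, #{σ : Perm α | σ • P = B} := by
        rw [sum_const_nat fiber_eq, card_powersetCard, card_univ, mul_comm]
    _ = #(univ : Finset (Perm α)) :=
        (card_eq_sum_card_fiberwise fun σ _ ↦ by simp [card_smul_finset]).symm
    _ = (Fintype.card α)! := by rw [card_univ, Fintype.card_perm]

theorem card_perm_smul_finset_mem_mul_choose (𝒜 : Finset (Finset α)) (P : Finset α) :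
    #{σ : Perm α | σ • P ∈ 𝒜} * (Fintype.card α).choose #P
      = #(𝒜 # #P) * (Fintype.card α)! := by
  rw [card_eq_sum_card_fiberwise (f := (· • P)) (t := 𝒜 # #P)
    (fun σ hσ ↦ by simpa [mem_slice, card_smul_finset] using hσ), sum_mul]
  refine sum_const_nat fun A hA ↦ ?_
  rw [mem_slice] at hA
  rw [← card_perm_smul_finset_eq_mul_choose hA.2, filter_filter]
  congr 2
  ext σ
  simp only [mem_filter, mem_univ, true_and]
  exact ⟨And.right, fun hσ ↦ ⟨hσ ▸ hA.1, hσ⟩⟩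

theorem sum_card_slice_div_choose_le_one (𝒜 : Finset (Finset α)) (J : Finset ℕ)
    (P : ℕ → Finset α) (hP : ∀ j ∈ J, #(P j) = j)
    (hunique : ∀ σ : Perm α, ∀ i ∈ J, ∀ j ∈ J, σ • P i ∈ 𝒜 → σ • P j ∈ 𝒜 → i = j) :
    ∑ j ∈ J, (#(𝒜 # j) : ℝ) / (Fintype.card α).choose j ≤ 1 := by
  have hfac : (0 : ℝ) < (Fintype.card α)! := by positivity
  have term_eq : ∀ j ∈ J, (#(𝒜 # j) : ℝ) / (Fintype.card α).choose j
      = #{σ : Perm α | σ • P j ∈ 𝒜} / (Fintype.card α)! := by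
    intro j hj
    have hchoose : (0 : ℝ) < (Fintype.card α).choose j :=
      mod_cast Nat.choose_pos (hP j hj ▸ card_le_univ _)
    rw [div_eq_div_iff hchoose.ne' hfac.ne']
    exact_mod_cast (hP j hj ▸ card_perm_smul_finset_mem_mul_choose 𝒜 (P j)).symm
  have count : ∑ j ∈ J, #{σ : Perm α | σ • P j ∈ 𝒜} ≤ (Fintype.card α)! :=
    calc ∑ j ∈ J, #{σ : Perm α | σ • P j ∈ 𝒜}
        = ∑ σ : Perm α, #{j ∈ J | σ • P j ∈ 𝒜} :=
          sum_card_bipartiteAbove_eq_sum_card_bipartiteBelow _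
      _ ≤ ∑ _σ : Perm α, 1 := sum_le_sum fun σ _ ↦ card_le_one.2 fun i hi j hj ↦
          hunique σ i (mem_filter.1 hi).1 j (mem_filter.1 hj).1 (mem_filter.1 hi).2
            (mem_filter.1 hj).2
      _ = (Fintype.card α)! := by simp [Fintype.card_perm]
  rw [sum_congr rfl term_eq, ← sum_div, div_le_one hfac]
  exact_mod_cast count

end PermutationCounting

section Windows

def finIco (n a b : ℕ) : Finset (Fin n) := {i | a ≤ (i : ℕ) ∧ (i : ℕ) < b}

variable {n a b c d : ℕ}

theorem card_finIco (h : b ≤ n) : #(finIco n a b) = b - a := by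
  have : finIco n a b = (Ico a b).attachFin fun x hx ↦ by grind := by
    ext i; simp [finIco]
  rw [this, card_attachFin, Nat.card_Ico]

theorem finIco_sdiff_finIco_of_le_right (hbd : b ≤ d) :
    finIco n a b \ finIco n c d = finIco n a (min b c) := by
  ext i; simp only [finIco, mem_sdiff, mem_filter, mem_univ, true_and]; omega

theorem finIco_sdiff_finIco_of_le_left (hac : a ≤ c) :
    finIco n c d \ finIco n a b = finIco n (max b c) d := by
  ext i; simp only [finIco, mem_sdiff, mem_filter, mem_univ, true_and]; omega

def windowLevel (p q m j : ℕ) : ℕ := j / (q - p) - p * m / (q - p)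

def window (p q m j : ℕ) : Finset (Fin ((p + q) * m)) :=
  finIco _ (p * windowLevel p q m j) (p * windowLevel p q m j + j)

variable {p q m i j : ℕ}

theorem windowLevel_le (hj : j ≤ q * m) : windowLevel p q m j ≤ m := by
  have hj' : j ≤ p * m + (q - p) * m := by
    rw [← add_mul]; exact hj.trans (Nat.mul_le_mul_right _ (by omega))
  rcases Nat.eq_zero_or_pos (q - p) with he | he
  · simp [windowLevel, he]
  · have := Nat.div_le_div_right (c := q - p) hj'
    rw [Nat.add_mul_div_left _ _ he] at this
    unfold windowLevel; omega

theorem windowLevel_mono (hij : i ≤ j) : windowLevel p q m i ≤ windowLevel p q m j :=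
  Nat.sub_le_sub_right (Nat.div_le_div_right hij) _

theorem eq_add_mul_windowLevel_sub (hi : p * m ≤ i) (hij : i ≤ j)
    (hmod : i % (q - p) = j % (q - p)) :
    j = i + (q - p) * (windowLevel p q m j - windowLevel p q m i) := by
  have hdiv := Nat.mul_le_mul_left (q - p) (Nat.div_le_div_right (c := q - p) hij)
  have hdiv' : p * m / (q - p) ≤ i / (q - p) := Nat.div_le_div_right hi
  have := Nat.div_add_mod i (q - p)
  have := Nat.div_add_mod j (q - p)
  have : windowLevel p q m j - windowLevel p q m i = j / (q - p) - i / (q - p) := by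
    unfold windowLevel; omega
  rw [this, Nat.mul_sub]
  omega

theorem card_window (hj : j ≤ q * m) : #(window p q m j) = j := by
  have := Nat.mul_le_mul_left p (windowLevel_le (p := p) hj)
  rw [window, card_finIco (by rw [add_mul]; omega)]
  omega

theorem card_window_sdiff_window_of_le (hi : p * m ≤ i) (hij : i ≤ j) (hj : j ≤ q * m) :
    #(window p q m i \ window p q m j) = p * (windowLevel p q m j - windowLevel p q m i) := by
  have hj_le := Nat.mul_le_mul_left p (windowLevel_le (p := p) hj)
  have hij_le := Nat.mul_le_mul_left p (windowLevel_mono (p := p) (q := q) (m := m) hij)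
  rw [window, window, finIco_sdiff_finIco_of_le_right (by omega),
    card_finIco (by rw [add_mul]; omega), Nat.mul_sub]
  omega

theorem card_window_sdiff_window_of_ge (hpq : p ≤ q) (hi : p * m ≤ i) (hij : i ≤ j)
    (hj : j ≤ q * m) (hmod : i % (q - p) = j % (q - p)) :
    #(window p q m j \ window p q m i) = q * (windowLevel p q m j - windowLevel p q m i) := by
  have hj_le := Nat.mul_le_mul_left p (windowLevel_le (p := p) hj)
  have hij_le := Nat.mul_le_mul_left p (windowLevel_mono (p := p) (q := q) (m := m) hij)
  have hji := eq_add_mul_windowLevel_sub (q := q) hi hij hmod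
  set t := windowLevel p q m j - windowLevel p q m i
  have hq : q * t = p * t + (q - p) * t := by rw [← add_mul, Nat.add_sub_cancel' hpq]
  rw [window, window, finIco_sdiff_finIco_of_le_left (by omega),
    card_finIco (by rw [add_mul]; omega), hq, Nat.mul_sub p]
  omega

theorem eq_of_smul_window_mem (hpq : p ≤ q) {𝒜 : Finset (Finset (Fin ((p + q) * m)))}
    (h : ∀ A ∈ 𝒜, ∀ B ∈ 𝒜, A ≠ B → p * #(A \ B) ≠ q * #(B \ A))
    (hi : i ∈ Icc (p * m) (q * m)) (hj : j ∈ Icc (p * m) (q * m))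
    (hmod : i % (q - p) = j % (q - p)) (σ : Perm (Fin ((p + q) * m)))
    (hσi : σ • window p q m i ∈ 𝒜) (hσj : σ • window p q m j ∈ 𝒜) : i = j := by
  wlog hij : i ≤ j generalizing i j
  · exact (this hj hi hmod.symm hσj hσi (le_of_not_ge hij)).symm
  rw [mem_Icc] at hi hj
  by_contra hne
  have hσne : σ • window p q m j ≠ σ • window p q m i := fun heq ↦ hne <| by
    simpa [card_smul_finset, card_window hi.2, card_window hj.2] using congrArg card heq.symm
  apply h _ hσj _ hσi hσne
  rw [← smul_finset_sdiff, ← smul_finset_sdiff, card_smul_finset, card_smul_finset,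
    card_window_sdiff_window_of_le hi.1 hij hj.2,
    card_window_sdiff_window_of_ge hpq hi.1 hij hj.2 hmod]
  ring

end Windows

theorem stmt_9_general (p q : ℕ) (hpq : p < q)
    (m n : ℕ) (hn : n = (p + q) * m)
    (𝒜 : Finset (Finset (Fin n)))
    (h : ∀ A ∈ 𝒜, ∀ B ∈ 𝒜, A ≠ B → p * (A \ B).card ≠ q * (B \ A).card)
    (k : ℕ) :
    ∑ j ∈ (Finset.Icc (p * m) (q * m)).filter (fun j => j % (q - p) = k),
      ((𝒜.filter (fun s => s.card = j)).card : ℝ) / (n.choose j : ℝ) ≤ 1 := by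
  subst hn
  simpa only [Fintype.card_fin, slice] using
    sum_card_slice_div_choose_le_one 𝒜 _ (window p q m)
      (fun j hj ↦ card_window (mem_Icc.1 (mem_filter.1 hj).1).2)
      fun σ i hi j hj ↦ eq_of_smul_window_mem hpq.le h (mem_filter.1 hi).1 (mem_filter.1 hj).1
        ((mem_filter.1 hi).2.trans (mem_filter.1 hj).2.symm) σ

theorem stmt_9 (p q : ℕ) (hp : 0 < p) (hpq : p < q) (hco : Nat.Coprime p q)
    (m n : ℕ) (hn : n = (p + q) * m)
    (𝒜 : Finset (Finset (Fin n)))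
    (h : ∀ A ∈ 𝒜, ∀ B ∈ 𝒜, A ≠ B → p * (A \ B).card ≠ q * (B \ A).card)
    (k : ℕ) (hk : k ≤ q - p - 1) :
    ∑ j ∈ (Finset.Icc (p * m) (q * m)).filter (fun j => j % (q - p) = k),
      ((𝒜.filter (fun s => s.card = j)).card : ℝ) / (n.choose j : ℝ) ≤ 1 :=
  stmt_9_general p q hpq m n hn 𝒜 h k
end
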